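/- A finite simple graph G is αh-perfect (for every induced subgraph H, the achromatic number of H equals the Hadwiger number of H) if and only if G is ωψ-perfect (for every induced subgraph H, the clique number of H equals the pseudoachromatic number of H). -/

import Mathlib

open SimpleGraph

/-- A `k`-coloring `c` of `G` is *complete* if it is surjective and for every pair of distinct
colors there is an edge of `G` whose endpoints receive those two colors. -/
def IsCompleteColoring {V : Type*} (G : SimpleGraph V) {k : ℕ} (c : V → Fin k) : Prop :=
  Function.Surjective c ∧
    ∀ i j : Fin k, i ≠ j → ∃ u v : V, G.Adj u v ∧ c u = i ∧ c v = j

/-- A coloring is *proper* if adjacent vertices receive distinct colors. -/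
def IsProperColoring {V : Type*} (G : SimpleGraph V) {k : ℕ} (c : V → Fin k) : Prop :=
  ∀ u v : V, G.Adj u v → c u ≠ c v

/-- A `k`-coloring `c` of `G` is *dominating* if it is surjective and every color class contains
a vertex having a neighbor in every other color class. -/
def IsDominatingColoring {V : Type*} (G : SimpleGraph V) {k : ℕ} (c : V → Fin k) : Prop :=
  Function.Surjective c ∧
    ∀ i : Fin k, ∃ v : V, c v = i ∧ ∀ j : Fin k, j ≠ i → ∃ u : V, G.Adj v u ∧ c u = j

/-- A `k`-coloring `c` of `G` is *pseudo-Grundy* if it is surjective and every vertex is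
adjacent to at least one vertex of each smaller color. -/
def IsPseudoGrundyColoring {V : Type*} (G : SimpleGraph V) {k : ℕ} (c : V → Fin k) : Prop :=
  Function.Surjective c ∧
    ∀ v : V, ∀ j : Fin k, j < c v → ∃ u : V, G.Adj v u ∧ c u = j

/-- The pseudoachromatic number `ψ(G)`: the largest `k` admitting a complete `k`-coloring. -/
noncomputable def pseudoachromaticNumber {V : Type*} (G : SimpleGraph V) : ℕ :=
  sSup {k | ∃ c : V → Fin k, IsCompleteColoring G c}

/-- The achromatic number `α(G)`: the largest `k` admitting a proper complete `k`-coloring. -/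
noncomputable def achromaticNumber {V : Type*} (G : SimpleGraph V) : ℕ :=
  sSup {k | ∃ c : V → Fin k, IsProperColoring G c ∧ IsCompleteColoring G c}

/-- The b-chromatic number `b(G)`: the largest `k` admitting a proper dominating `k`-coloring. -/
noncomputable def bChromaticNumber {V : Type*} (G : SimpleGraph V) : ℕ :=
  sSup {k | ∃ c : V → Fin k, IsProperColoring G c ∧ IsDominatingColoring G c}

/-- The pseudo-b-chromatic number `B(G)`: the largest `k` admitting a dominating `k`-coloring. -/
noncomputable def pseudoBChromaticNumber {V : Type*} (G : SimpleGraph V) : ℕ :=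
  sSup {k | ∃ c : V → Fin k, IsDominatingColoring G c}

/-- The Grundy number `Γ(G)`: the largest `k` admitting a proper pseudo-Grundy `k`-coloring. -/
noncomputable def grundyNumber {V : Type*} (G : SimpleGraph V) : ℕ :=
  sSup {k | ∃ c : V → Fin k, IsProperColoring G c ∧ IsPseudoGrundyColoring G c}

/-- The pseudo-Grundy number `γ(G)`: the largest `k` admitting a pseudo-Grundy `k`-coloring. -/
noncomputable def pseudoGrundyNumber {V : Type*} (G : SimpleGraph V) : ℕ :=
  sSup {k | ∃ c : V → Fin k, IsPseudoGrundyColoring G c}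

/-- `G` contains the complete graph `K_k` as a minor: there are `k` pairwise disjoint
"branch sets", each inducing a connected (nonempty) subgraph, with an edge of `G` between
every two of them. -/
def HasCompleteMinor {V : Type*} (G : SimpleGraph V) (k : ℕ) : Prop :=
  ∃ B : Fin k → Set V,
    (∀ i, (G.induce (B i)).Connected) ∧
    (∀ i j : Fin k, i ≠ j → Disjoint (B i) (B j)) ∧
    (∀ i j : Fin k, i ≠ j → ∃ u ∈ B i, ∃ v ∈ B j, G.Adj u v)

/-- The Hadwiger number `h(G)`: the largest `k` such that `K_k` is a minor of `G`. -/
noncomputable def hadwigerNumber {V : Type*} (G : SimpleGraph V) : ℕ :=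
  sSup {k | HasCompleteMinor G k}

/-- `G` has an induced subgraph isomorphic to `H`. -/
def HasInducedCopy {V : Type*} {W : Type*} (G : SimpleGraph V) (H : SimpleGraph W) : Prop :=
  ∃ s : Set V, Nonempty (G.induce s ≃g H)

/-- A graph is *chordal* if it has no induced cycle on four or more vertices. -/
def IsChordal {V : Type*} (G : SimpleGraph V) : Prop :=
  ∀ n : ℕ, 4 ≤ n → ¬ HasInducedCopy G (cycleGraph n)

/-- The diamond graph `D`: `K₄` minus one edge. -/
def diamondGraph : SimpleGraph (Fin 4) :=
  (⊤ : SimpleGraph (Fin 4)).deleteEdges {s(0, 1)}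

/-!
Always `ω ≤ α ≤ ψ` and `ω ≤ h ≤ ψ` (a proper colouring with the fewest colours is complete, and
the branch sets of a `K_k` minor are the classes of a complete `k`-colouring), so `ω = ψ` on every
induced subgraph forces `α = h` there.

Conversely, each of `P₄`, `C₄`, `3K₂` and `P₃ ∪ K₂` has `α ≠ h`: the three forests have `α = 3`
but no `K₃` minor, while `α(C₄) = 2 < 3 = h(C₄)`. So an αh-perfect graph contains none of them as
an induced subgraph. In such a graph, either all edges lie in one component, which being
`{P₄, C₄}`-free has a vertex `u` adjacent to all of it, or there are two non-trivial components,
which are cliques by `P₃ ∪ K₂`-freeness and carry all edges by `3K₂`-freeness. Take a complete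
`k`-colouring. In the second case one of the two cliques meets every colour class. In the first,
deleting the colour class of `u` leaves a complete `(k - 1)`-colouring, hence by induction on the
number of vertices a clique of size `k - 1`, all of whose vertices are adjacent to `u`.
-/

section

variable {V W : Type*} {G : SimpleGraph V} {H : SimpleGraph W} {k : ℕ}

lemma IsCompleteColoring.le_card [Finite V] {c : V → Fin k} (hc : IsCompleteColoring G c) :
    k ≤ Nat.card V := by
  simpa using Nat.card_le_card_of_surjective c hc.1

lemma HasCompleteMinor.le_card [Finite V] (h : HasCompleteMinor G k) : k ≤ Nat.card V := by
  obtain ⟨B, hconn, hdisj, -⟩ := h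
  let f : Fin k → V := fun i => (hconn i).nonempty.some
  have hf : ∀ i, f i ∈ B i := fun i => (hconn i).nonempty.some.2
  have hinj : Function.Injective f := fun i j hij => by
    by_contra hne
    exact Set.disjoint_left.mp (hdisj i j hne) (hf i) (hij ▸ hf j)
  simpa using Nat.card_le_card_of_injective f hinj

lemma HasCompleteMinor.mono {m : ℕ} (h : HasCompleteMinor G k) (hmk : m ≤ k) :
    HasCompleteMinor G m := by
  obtain ⟨B, hconn, hdisj, hadj⟩ := h
  refine ⟨B ∘ Fin.castLE hmk, fun i => hconn _, fun i j hij => hdisj _ _ ?_,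
    fun i j hij => hadj _ _ ?_⟩ <;>
  exact (Fin.castLE_injective hmk).ne hij

lemma HasCompleteMinor.map (f : G →g H) (hf : Function.Injective f) (h : HasCompleteMinor G k) :
    HasCompleteMinor H k := by
  obtain ⟨B, hconn, hdisj, hadj⟩ := h
  refine ⟨fun i => f '' B i, fun i => ?_, fun i j hij => ?_, fun i j hij => ?_⟩
  · refine (hconn i).map (induceHom f (Set.mapsTo_image f (B i))) ?_
    rintro ⟨_, v, hv, rfl⟩
    exact ⟨⟨v, hv⟩, rfl⟩
  · exact (Set.disjoint_image_iff hf).mpr (hdisj i j hij)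
  · obtain ⟨u, hu, v, hv, huv⟩ := hadj i j hij
    exact ⟨f u, Set.mem_image_of_mem f hu, f v, Set.mem_image_of_mem f hv, f.map_adj huv⟩

lemma SimpleGraph.IsNClique.hasCompleteMinor {s : Finset V} (hs : G.IsNClique k s) :
    HasCompleteMinor G k := by
  let e : Fin k ≃ s := (finCongr hs.card_eq.symm).trans s.equivFin.symm
  refine ⟨fun i => {(e i : V)}, fun i => Connected.of_subsingleton, fun i j hij => ?_,
    fun i j hij => ⟨_, rfl, _, rfl, hs.isClique (e i).2 (e j).2 ?_⟩⟩ <;>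
  simpa [Subtype.ext_iff] using e.injective.ne hij

lemma HasCompleteMinor.exists_isCompleteColoring (h : HasCompleteMinor G (k + 1)) :
    ∃ c : V → Fin (k + 1), IsCompleteColoring G c := by
  classical
  obtain ⟨B, hconn, hdisj, hadj⟩ := h
  let c : V → Fin (k + 1) := fun v => if hv : ∃ i, v ∈ B i then hv.choose else 0
  have hc : ∀ i v, v ∈ B i → c v = i := fun i v hv => by
    have hv' : ∃ i, v ∈ B i := ⟨i, hv⟩
    simp only [c, dif_pos hv']
    by_contra hne
    exact Set.disjoint_left.mp (hdisj _ _ hne) hv'.choose_spec hv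
  refine ⟨c, fun i => ?_, fun i j hij => ?_⟩
  · obtain ⟨⟨v, hv⟩⟩ := (hconn i).nonempty
    exact ⟨v, hc i v hv⟩
  · obtain ⟨u, hu, v, hv, huv⟩ := hadj i j hij
    exact ⟨u, v, huv, hc i u hu, hc j v hv⟩

lemma le_pseudoachromaticNumber [Finite V] {c : V → Fin k} (hc : IsCompleteColoring G c) :
    k ≤ pseudoachromaticNumber G :=
  le_csSup ⟨Nat.card V, fun _ ⟨_, hc⟩ => hc.le_card⟩ ⟨c, hc⟩

lemma le_achromaticNumber [Finite V] {c : V → Fin k} (hp : IsProperColoring G c)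
    (hc : IsCompleteColoring G c) : k ≤ achromaticNumber G :=
  le_csSup ⟨Nat.card V, fun _ ⟨_, _, hc⟩ => hc.le_card⟩ ⟨c, hp, hc⟩

lemma le_hadwigerNumber [Finite V] (h : HasCompleteMinor G k) : k ≤ hadwigerNumber G :=
  le_csSup ⟨Nat.card V, fun _ => HasCompleteMinor.le_card⟩ h

lemma achromaticNumber_le_pseudoachromaticNumber [Finite V] :
    achromaticNumber G ≤ pseudoachromaticNumber G :=
  csSup_le' fun _ ⟨_, _, hc⟩ => le_pseudoachromaticNumber hc

lemma hadwigerNumber_le_pseudoachromaticNumber [Finite V] :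
    hadwigerNumber G ≤ pseudoachromaticNumber G := by
  refine csSup_le' fun k hk => ?_
  cases k with
  | zero => exact Nat.zero_le _
  | succ k =>
    obtain ⟨c, hc⟩ := HasCompleteMinor.exists_isCompleteColoring hk
    exact le_pseudoachromaticNumber hc

lemma cliqueNum_le_hadwigerNumber [Finite V] : G.cliqueNum ≤ hadwigerNumber G := by
  obtain ⟨s, hs⟩ := G.exists_isNClique_cliqueNum
  exact le_hadwigerNumber hs.hasCompleteMinor

/-- A proper colouring with the fewest colours is complete: two colour classes without an edge
between them could be merged. -/
lemma exists_proper_complete_coloring_ge_cliqueNum [Finite V] :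
    ∃ k, G.cliqueNum ≤ k ∧ ∃ c : V → Fin k, IsProperColoring G c ∧ IsCompleteColoring G c := by
  classical
  have := Fintype.ofFinite V
  have hcol : ∃ n, G.Colorable n := ⟨_, G.colorable_of_fintype⟩
  set n := Nat.find hcol
  obtain ⟨C⟩ : G.Colorable n := Nat.find_spec hcol
  have hmin : ∀ j : Fin n, ¬G.Colorable (Fintype.card {x : Fin n // x ≠ j}) := fun j => by
    simpa using Nat.find_min hcol (Nat.sub_one_lt_of_lt j.pos)
  obtain ⟨s, hs⟩ := G.exists_isNClique_cliqueNum
  refine ⟨n, hs.card_eq ▸ hs.isClique.card_le_of_colorable ⟨C⟩, C, fun u v => C.valid,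
    fun j => ?_, fun i j hij => ?_⟩
  · by_contra! hj
    exact hmin j (Coloring.mk (fun v => (⟨C v, hj v⟩ : {x // x ≠ j}))
      fun huv h => C.valid huv (congrArg Subtype.val h)).colorable
  · by_contra! hno
    refine hmin j (Coloring.mk (fun v => if hv : C v = j then (⟨i, hij⟩ : {x // x ≠ j})
      else ⟨C v, hv⟩) fun {u v} huv h => ?_).colorable
    have hne := C.valid huv
    split_ifs at h with hu hv hv <;> simp only [Subtype.mk.injEq] at h
    · exact hne (hu.trans hv.symm)
    · exact hno v u huv.symm h.symm hu
    · exact hno u v huv h hv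
    · exact hne h

lemma cliqueNum_le_achromaticNumber [Finite V] : G.cliqueNum ≤ achromaticNumber G := by
  obtain ⟨k, hk, c, hp, hc⟩ := exists_proper_complete_coloring_ge_cliqueNum (G := G)
  exact hk.trans (le_achromaticNumber hp hc)

lemma hadwigerNumber_le_of_injective [Finite W] (f : G →g H) (hf : Function.Injective f) :
    hadwigerNumber G ≤ hadwigerNumber H :=
  csSup_le' fun _ h => le_hadwigerNumber (h.map f hf)

lemma hadwigerNumber_congr [Finite V] [Finite W] (φ : G ≃g H) :
    hadwigerNumber G = hadwigerNumber H :=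
  le_antisymm (hadwigerNumber_le_of_injective φ.toHom φ.injective)
    (hadwigerNumber_le_of_injective φ.symm.toHom φ.symm.injective)

lemma IsProperColoring.comp_iso (φ : G ≃g H) {c : W → Fin k} (hc : IsProperColoring H c) :
    IsProperColoring G (c ∘ φ) :=
  fun _ _ huv => hc _ _ (φ.map_adj_iff.mpr huv)

lemma IsCompleteColoring.comp_iso (φ : G ≃g H) {c : W → Fin k} (hc : IsCompleteColoring H c) :
    IsCompleteColoring G (c ∘ φ) := by
  refine ⟨hc.1.comp φ.surjective, fun i j hij => ?_⟩
  obtain ⟨u, v, huv, rfl, rfl⟩ := hc.2 i j hij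
  exact ⟨φ.symm u, φ.symm v, φ.symm.map_adj_iff.mpr huv, by simp, by simp⟩

lemma achromaticNumber_congr (φ : G ≃g H) : achromaticNumber G = achromaticNumber H := by
  unfold achromaticNumber
  congr 1
  ext k
  constructor
  · rintro ⟨c, hp, hc⟩
    exact ⟨c ∘ φ.symm, hp.comp_iso φ.symm, hc.comp_iso φ.symm⟩
  · rintro ⟨c, hp, hc⟩
    exact ⟨c ∘ φ, hp.comp_iso φ, hc.comp_iso φ⟩

lemma isAcyclic_pathGraph (n : ℕ) : (pathGraph n).IsAcyclic := by
  refine isAcyclic_iff_forall_adj_isBridge.mpr fun u v huv => ?_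
  wlog h : u.val + 1 = v.val generalizing u v
  · rw [Sym2.eq_swap]
    exact this v u huv.symm ((pathGraph_adj.mp huv).resolve_left h)
  rw [isBridge_iff]
  rintro ⟨p⟩
  -- a walk from `u` to `v = u + 1` has to cross from `{x ≤ u}` to `{x > u}` along `s(u, v)`
  obtain ⟨d, -, hdu, hdv⟩ := p.exists_boundary_dart {x | x ≤ u} (le_refl u)
    (by simp only [Set.mem_ofPred_eq, Fin.le_def, not_le]; omega)
  have hadj := d.adj
  rw [deleteEdges_adj, pathGraph_adj] at hadj
  simp only [Set.mem_ofPred_eq, Fin.le_def, not_le] at hdu hdv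
  refine hadj.2 ?_
  have h1 : d.fst = u := Fin.ext (by omega)
  have h2 : d.snd = v := Fin.ext (by omega)
  simp [← h1, ← h2]

/-- The edge between the first two branch sets of a `K₃` minor is not a bridge: its ends are still
joined through the third branch set. -/
lemma HasCompleteMinor.not_isAcyclic (h : HasCompleteMinor G 3) : ¬G.IsAcyclic := by
  obtain ⟨B, hconn, hdisj, hadj⟩ := h
  have hne : ∀ {i j p q}, p ∈ B i → q ∈ B j → i ≠ j → p ≠ q :=
    fun hp hq hij h => Set.disjoint_left.mp (hdisj _ _ hij) hp (h ▸ hq)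
  obtain ⟨u, hu, v, hv, huv⟩ := hadj 0 1 (by decide)
  obtain ⟨x, hx, y, hy, hxy⟩ := hadj 1 2 (by decide)
  obtain ⟨z, hz, w, hw, hzw⟩ := hadj 2 0 (by decide)
  set G' := G.deleteEdges {s(u, v)}
  have hsurvive : ∀ {p q}, G.Adj p q → (u ≠ p ∧ u ≠ q) ∨ (v ≠ p ∧ v ≠ q) → G'.Adj p q := by
    intro p q hpq h
    rw [deleteEdges_adj, Set.mem_singleton_iff, Sym2.eq_iff]
    exact ⟨hpq, by tauto⟩
  have hwithin : ∀ i, ∀ p ∈ B i, ∀ q ∈ B i, G'.Reachable p q := by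
    intro i p hp q hq
    let f : G.induce (B i) →g G' :=
      { toFun := Subtype.val
        map_rel' := fun {a b} hab => hsurvive hab <| by
          by_cases hi : i = 0
          · subst hi
            exact .inr ⟨hne hv a.2 (by decide), hne hv b.2 (by decide)⟩
          · exact .inl ⟨hne hu a.2 (Ne.symm hi), hne hu b.2 (Ne.symm hi)⟩ }
    exact ((hconn i).preconnected ⟨p, hp⟩ ⟨q, hq⟩).map f
  intro hG
  refine isBridge_iff.mp (isAcyclic_iff_forall_adj_isBridge.mp hG huv) ?_
  have hxy' : G'.Adj x y := hsurvive hxy (.inl ⟨hne hu hx (by decide), hne hu hy (by decide)⟩)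
  have hzw' : G'.Adj z w := hsurvive hzw (.inr ⟨hne hv hz (by decide), hne hv hw (by decide)⟩)
  exact (hwithin 0 u hu w hw).trans <| hzw'.symm.reachable.trans <| (hwithin 2 z hz y hy).trans <|
    hxy'.symm.reachable.trans (hwithin 1 x hx v hv)

lemma SimpleGraph.IsAcyclic.hadwigerNumber_le_two [Finite V] (hG : G.IsAcyclic) :
    hadwigerNumber G ≤ 2 :=
  csSup_le' fun _ hk => not_lt.mp fun h3 => (hk.mono h3).not_isAcyclic hG

lemma achromaticNumber_ne_hadwigerNumber_of_isAcyclic [Finite V] (hG : G.IsAcyclic)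
    {c : V → Fin 3} (hp : IsProperColoring G c) (hc : IsCompleteColoring G c) :
    achromaticNumber G ≠ hadwigerNumber G :=
  (hG.hadwigerNumber_le_two.trans_lt (le_achromaticNumber hp hc)).ne'

instance (n : ℕ) : DecidableRel (pathGraph n).Adj := fun _ _ => decidable_of_iff' _ pathGraph_adj

/-- `3K₂`, as a spanning subgraph of the path `0 - 1 - ⋯ - 5`. -/
def threeK2 : SimpleGraph (Fin 6) := (pathGraph 6).deleteEdges {s(1, 2), s(3, 4)}

/-- `P₃ ∪ K₂`, as a spanning subgraph of the path `0 - 1 - ⋯ - 4`. -/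
def p3SumK2 : SimpleGraph (Fin 5) := (pathGraph 5).deleteEdges {s(2, 3)}

lemma achromaticNumber_ne_hadwigerNumber_pathGraph_four :
    achromaticNumber (pathGraph 4) ≠ hadwigerNumber (pathGraph 4) :=
  achromaticNumber_ne_hadwigerNumber_of_isAcyclic (isAcyclic_pathGraph 4) (c := ![0, 1, 2, 0])
    (by unfold IsProperColoring; decide) (by unfold IsCompleteColoring; decide)

lemma achromaticNumber_ne_hadwigerNumber_threeK2 :
    achromaticNumber threeK2 ≠ hadwigerNumber threeK2 :=
  achromaticNumber_ne_hadwigerNumber_of_isAcyclic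
    ((isAcyclic_pathGraph 6).anti (deleteEdges_le _)) (c := ![0, 1, 1, 2, 2, 0])
    (by unfold IsProperColoring threeK2; decide) (by unfold IsCompleteColoring threeK2; decide)

lemma achromaticNumber_ne_hadwigerNumber_p3SumK2 :
    achromaticNumber p3SumK2 ≠ hadwigerNumber p3SumK2 :=
  achromaticNumber_ne_hadwigerNumber_of_isAcyclic
    ((isAcyclic_pathGraph 5).anti (deleteEdges_le _)) (c := ![0, 1, 2, 0, 2])
    (by unfold IsProperColoring p3SumK2; decide) (by unfold IsCompleteColoring p3SumK2; decide)

lemma achromaticNumber_cycleGraph_four_le_two : achromaticNumber (cycleGraph 4) ≤ 2 := by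
  refine csSup_le' fun k ⟨c, hp, hc⟩ => ?_
  have h01 := hp 0 1 (by decide)
  have h12 := hp 1 2 (by decide)
  have h23 := hp 2 3 (by decide)
  have h30 := hp 3 0 (by decide)
  have hopp : ∀ i j : Fin 4, j = i + 2 → c i = c j := by
    intro i j hij
    by_contra hne
    obtain ⟨u, v, huv, hu, hv⟩ := hc.2 _ _ hne
    clear hp hc
    fin_cases i <;> fin_cases u <;> fin_cases v <;> subst hij <;>
      first | exact absurd huv (by decide) | simp_all
  have hsurj : Function.Surjective ![c 0, c 1] := fun i => by
    obtain ⟨v, rfl⟩ := hc.1 i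
    fin_cases v
    exacts [⟨0, rfl⟩, ⟨1, rfl⟩, ⟨0, hopp 0 2 rfl⟩, ⟨1, hopp 1 3 rfl⟩]
  simpa using Fintype.card_le_of_surjective _ hsurj

lemma three_le_hadwigerNumber_cycleGraph_four : 3 ≤ hadwigerNumber (cycleGraph 4) := by
  refine le_hadwigerNumber ⟨![{0}, {1}, {2, 3}], fun i => ?_, fun i j hij => ?_, fun i j hij => ?_⟩
  · fin_cases i
    · exact (Connected.of_subsingleton : (induce ({0} : Set (Fin 4)) (cycleGraph 4)).Connected)
    · exact (Connected.of_subsingleton : (induce ({1} : Set (Fin 4)) (cycleGraph 4)).Connected)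
    · exact induce_pair_connected_of_adj (by decide)
  · fin_cases i <;> fin_cases j <;> simp_all
  · fin_cases i <;> fin_cases j <;> simp_all <;> decide

lemma achromaticNumber_ne_hadwigerNumber_cycleGraph_four :
    achromaticNumber (cycleGraph 4) ≠ hadwigerNumber (cycleGraph 4) := by
  have := achromaticNumber_cycleGraph_four_le_two
  have := three_le_hadwigerNumber_cycleGraph_four
  omega

lemma not_isIndContained_of_achromaticNumber_ne_hadwigerNumber [Finite V]
    (hG : ∀ s : Set V, achromaticNumber (G.induce s) = hadwigerNumber (G.induce s))
    (hH : achromaticNumber H ≠ hadwigerNumber H) : ¬H ⊴ G := by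
  rintro ⟨e⟩
  have : Finite W := Finite.of_injective e e.injective
  let φ := e.isoInduceRange
  exact hH (by rw [achromaticNumber_congr φ, hadwigerNumber_congr φ, hG])

structure ObstructionFree (G : SimpleGraph V) : Prop where
  pathGraph_four : ¬pathGraph 4 ⊴ G
  cycleGraph_four : ¬cycleGraph 4 ⊴ G
  threeK2 : ¬threeK2 ⊴ G
  p3SumK2 : ¬p3SumK2 ⊴ G

lemma obstructionFree_of_achromaticNumber_eq_hadwigerNumber [Finite V]
    (hG : ∀ s : Set V, achromaticNumber (G.induce s) = hadwigerNumber (G.induce s)) :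
    ObstructionFree G where
  pathGraph_four := not_isIndContained_of_achromaticNumber_ne_hadwigerNumber hG
    achromaticNumber_ne_hadwigerNumber_pathGraph_four
  cycleGraph_four := not_isIndContained_of_achromaticNumber_ne_hadwigerNumber hG
    achromaticNumber_ne_hadwigerNumber_cycleGraph_four
  threeK2 := not_isIndContained_of_achromaticNumber_ne_hadwigerNumber hG
    achromaticNumber_ne_hadwigerNumber_threeK2
  p3SumK2 := not_isIndContained_of_achromaticNumber_ne_hadwigerNumber hG
    achromaticNumber_ne_hadwigerNumber_p3SumK2

lemma ObstructionFree.induce (hG : ObstructionFree G) (s : Set V) :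
    ObstructionFree (G.induce s) :=
  have hs : G.induce s ⊴ G := (Embedding.induce s).isIndContained
  ⟨fun h => hG.pathGraph_four (h.trans hs), fun h => hG.cycleGraph_four (h.trans hs),
    fun h => hG.threeK2 (h.trans hs), fun h => hG.p3SumK2 (h.trans hs)⟩

lemma isIndContained_of_adj_iff {n : ℕ} {H : SimpleGraph (Fin n)} (f : Fin n → V)
    (hf : Function.Injective f) (h : ∀ i j, G.Adj (f i) (f j) ↔ H.Adj i j) : H ⊴ G :=
  ⟨⟨⟨f, hf⟩, h _ _⟩⟩

lemma pathGraph_four_isIndContained {a b c d : V} (hab : G.Adj a b) (hbc : G.Adj b c)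
    (hcd : G.Adj c d) (hac : ¬G.Adj a c) (hbd : ¬G.Adj b d) (had : ¬G.Adj a d) :
    pathGraph 4 ⊴ G :=
  isIndContained_of_adj_iff ![a, b, c, d]
    (fun i j h => by fin_cases i <;> fin_cases j <;> simp_all [G.adj_comm])
    (fun i j => by fin_cases i <;> fin_cases j <;> simp [pathGraph_adj, *, G.adj_comm])

lemma cycleGraph_four_isIndContained {a b c d : V} (hab : G.Adj a b) (hbc : G.Adj b c)
    (hcd : G.Adj c d) (hda : G.Adj d a) (hac : ¬G.Adj a c) (hbd : ¬G.Adj b d) (hac' : a ≠ c)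
    (hbd' : b ≠ d) : cycleGraph 4 ⊴ G :=
  isIndContained_of_adj_iff ![a, b, c, d]
    (fun i j h => by fin_cases i <;> fin_cases j <;> simp_all [G.adj_comm])
    (fun i j => by fin_cases i <;> fin_cases j <;> simp +decide [*, hda.symm, G.adj_comm])

lemma ne_and_not_adj_of_connectedComponentMk_ne {p q : V}
    (h : G.connectedComponentMk p ≠ G.connectedComponentMk q) : p ≠ q ∧ ¬G.Adj p q :=
  ⟨fun hpq => h (hpq ▸ rfl), fun hpq => h (ConnectedComponent.connectedComponentMk_eq_of_adj hpq)⟩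

lemma threeK2_isIndContained {a b c d e f : V} (hab : G.Adj a b) (hcd : G.Adj c d)
    (hef : G.Adj e f) (hac : ¬G.Reachable a c) (hae : ¬G.Reachable a e)
    (hce : ¬G.Reachable c e) : threeK2 ⊴ G := by
  have hb := (ConnectedComponent.connectedComponentMk_eq_of_adj hab).symm
  have hd := (ConnectedComponent.connectedComponentMk_eq_of_adj hcd).symm
  have hf := (ConnectedComponent.connectedComponentMk_eq_of_adj hef).symm
  rw [← ConnectedComponent.eq] at hac hae hce
  exact isIndContained_of_adj_iff ![a, b, c, d, e, f]
    (fun i j h => by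
      fin_cases i <;> fin_cases j <;>
        simp_all [-ConnectedComponent.eq, G.adj_comm, ne_and_not_adj_of_connectedComponentMk_ne])
    (fun i j => by
      fin_cases i <;> fin_cases j <;>
        simp +decide [-ConnectedComponent.eq, threeK2, *, G.adj_comm,
          ne_and_not_adj_of_connectedComponentMk_ne, Ne.symm])

lemma p3SumK2_isIndContained {a b c x y : V} (hab : G.Adj a b) (hbc : G.Adj b c)
    (hac : ¬G.Adj a c) (hac' : a ≠ c) (hxy : G.Adj x y) (hbx : ¬G.Reachable b x) :
    p3SumK2 ⊴ G := by
  have ha := ConnectedComponent.connectedComponentMk_eq_of_adj hab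
  have hc := (ConnectedComponent.connectedComponentMk_eq_of_adj hbc).symm
  have hy := (ConnectedComponent.connectedComponentMk_eq_of_adj hxy).symm
  rw [← ConnectedComponent.eq] at hbx
  exact isIndContained_of_adj_iff ![a, b, c, x, y]
    (fun i j h => by
      fin_cases i <;> fin_cases j <;>
        simp_all [-ConnectedComponent.eq, G.adj_comm, ne_and_not_adj_of_connectedComponentMk_ne])
    (fun i j => by
      fin_cases i <;> fin_cases j <;>
        simp +decide [-ConnectedComponent.eq, p3SumK2, *, G.adj_comm,
          ne_and_not_adj_of_connectedComponentMk_ne, Ne.symm])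

lemma SimpleGraph.Connected.exists_isUniversal [Finite V] (hG : G.Connected)
    (hP4 : ¬pathGraph 4 ⊴ G) (hC4 : ¬cycleGraph 4 ⊴ G) : ∃ u, G.IsUniversal u := by
  classical
  have := Fintype.ofFinite V
  obtain ⟨u, -, hu⟩ :=
    Finset.univ.exists_max_image (fun v => G.degree v) ⟨hG.nonempty.some, Finset.mem_univ _⟩
  refine ⟨u, fun w huw => ?_⟩
  by_contra huw'
  -- an edge `xy` leaving the closed neighbourhood of `u`
  obtain ⟨d, -, hx, hy⟩ :=
    (hG u w).some.exists_boundary_dart {p | p = u ∨ G.Adj u p} (.inl rfl) (by simp [huw.symm, huw'])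
  obtain ⟨⟨x, y⟩, hxy⟩ := d
  simp only [Set.mem_ofPred_eq, not_or] at hx hy
  have hux : G.Adj u x := hx.resolve_left fun h => hy.2 (h ▸ hxy)
  -- otherwise `z u x y` is an induced `P₄` or `u z y x` an induced `C₄`
  have hN : ∀ z, G.Adj u z → z ≠ x → G.Adj x z := fun z huz hzx => by
    by_contra hxz
    by_cases hzy : G.Adj z y
    · exact hC4 (cycleGraph_four_isIndContained huz hzy hxy.symm hux.symm hy.2
        (fun h => hxz h.symm) (Ne.symm hy.1) hzx)
    · exact hP4 (pathGraph_four_isIndContained huz.symm hux hxy (fun h => hxz h.symm) hy.2 hzy)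
  have hsub : insert u (insert y ((G.neighborFinset u).erase x)) ⊆ G.neighborFinset x := by
    intro z hz
    simp only [Finset.mem_insert, Finset.mem_erase, mem_neighborFinset] at hz ⊢
    rcases hz with rfl | rfl | ⟨hzx, huz⟩
    exacts [hux.symm, hxy, hN z huz hzx]
  have hcard : (insert u (insert y ((G.neighborFinset u).erase x))).card = G.degree u + 1 := by
    rw [Finset.card_insert_of_notMem (by simp [Ne.symm hy.1]),
      Finset.card_insert_of_notMem (by simp [hy.2]), Finset.card_erase_of_mem (by simpa using hux),
      card_neighborFinset_eq_degree]
    have := (G.degree_pos_iff_exists_adj u).mpr ⟨x, hux⟩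
    omega
  have := Finset.card_le_card hsub
  have := hu x (Finset.mem_univ x)
  rw [hcard, card_neighborFinset_eq_degree] at *
  omega

lemma isClique_setOf_reachable_of_not_reachable (hP3K2 : ¬p3SumK2 ⊴ G) {u x y : V}
    (hxy : G.Adj x y) (hux : ¬G.Reachable u x) : G.IsClique {p | G.Reachable u p} := by
  intro p hp q hq hpq
  by_contra hna
  set C := G.connectedComponentMk u
  have hmem : ∀ {v}, G.Reachable u v → v ∈ C.supp := fun hv =>
    (C.mem_supp_iff _).mpr (ConnectedComponent.eq.mpr hv.symm)
  have hconn : (G.induce C.supp).Connected := C.connected_toSimpleGraph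
  obtain ⟨w, hw⟩ := (hconn.preconnected ⟨p, hmem hp⟩ ⟨q, hmem hq⟩).exists_walk_length_eq_dist
  obtain ⟨a, b, c, hab, hbc, hac, hne⟩ := w.exists_adj_adj_not_adj_ne hw
    (hconn.one_lt_dist_of_ne_of_not_adj (fun h => hpq (congrArg Subtype.val h)) hna)
  have hub : G.Reachable u b := (ConnectedComponent.eq.mp ((C.mem_supp_iff _).mp b.2)).symm
  exact hP3K2 (p3SumK2_isIndContained hab hbc hac (fun h => hne (Subtype.ext h)) hxy
    fun hbx => hux (hub.trans hbx))

lemma IsCompleteColoring.surjOn_or_surjOn {c : V → Fin k} (hc : IsCompleteColoring G c)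
    (hk : 2 ≤ k) {u x : V} (hcov : ∀ p q, G.Adj p q → G.Reachable u p ∨ G.Reachable x p) :
    Set.SurjOn c {p | G.Reachable u p} Set.univ ∨ Set.SurjOn c {p | G.Reachable x p} Set.univ := by
  by_contra! h
  obtain ⟨⟨i, -, hi⟩, ⟨j, -, hj⟩⟩ := And.imp Set.not_subset.mp Set.not_subset.mp h
  have : ∃ p q, G.Adj p q ∧ c p = i ∧ (c p = j ∨ c q = j) := by
    by_cases hij : i = j
    · have : Nontrivial (Fin k) := Fin.nontrivial_iff_two_le.mpr hk
      obtain ⟨i', hi'⟩ := exists_ne i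
      obtain ⟨p, q, hpq, hp, -⟩ := hc.2 i i' hi'.symm
      exact ⟨p, q, hpq, hp, .inl (hp.trans hij)⟩
    · obtain ⟨p, q, hpq, hp, hq⟩ := hc.2 i j hij
      exact ⟨p, q, hpq, hp, .inr hq⟩
  obtain ⟨p, q, hpq, hp, hpj | hqj⟩ := this <;> rcases hcov p q hpq with hup | hxp
  exacts [hi ⟨p, hup, hp⟩, hj ⟨p, hxp, hpj⟩, hi ⟨p, hup, hp⟩, hj ⟨q, hxp.trans hpq.reachable, hqj⟩]

lemma le_cliqueNum_of_isClique [Finite V] {s : Set V} (hs : G.IsClique s) {c : V → Fin k}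
    (hc : Set.SurjOn c s Set.univ) : k ≤ G.cliqueNum := by
  classical
  have := Fintype.ofFinite V
  calc k = (Finset.univ : Finset (Fin k)).card := by simp
    _ ≤ s.toFinset.card := Finset.card_le_card_of_surjOn c (by simpa using hc)
    _ ≤ G.cliqueNum := IsClique.card_le_cliqueNum (tc := by simpa using hs)

lemma cliqueNum_induce_lt [Finite V] {s : Set V} {u : V} (hus : u ∉ s)
    (hu : ∀ p q, G.Adj p q → p ≠ u → G.Adj u p) (h2 : 2 ≤ (G.induce s).cliqueNum) :
    (G.induce s).cliqueNum < G.cliqueNum := by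
  classical
  obtain ⟨t, ht⟩ := (G.induce s).exists_isNClique_cliqueNum
  rw [isNClique_induce_iff] at ht
  have hadj : ∀ b ∈ t.map (.subtype _), G.Adj u b := by
    intro b hb
    obtain ⟨b', hb', hbb'⟩ := Finset.exists_mem_ne (ht.card_eq ▸ h2) b
    obtain ⟨⟨b, hbs⟩, -, rfl⟩ := Finset.mem_map.mp hb
    exact hu _ _ (ht.isClique hb hb' hbb'.symm) (fun h => hus (h ▸ hbs))
  exact (ht.insert hadj).isClique.card_le_cliqueNum.trans_lt' (by simp [(ht.insert hadj).card_eq])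

lemma IsCompleteColoring.exists_induce_ne {c : V → Fin (k + 1)} (hc : IsCompleteColoring G c)
    (j : Fin (k + 1)) :
    ∃ c' : {v | c v ≠ j} → Fin k, IsCompleteColoring (G.induce {v | c v ≠ j}) c' := by
  have hmem : ∀ {v} (i : Fin k), c v = j.succAbove i → c v ≠ j :=
    fun i hv => hv ▸ Fin.succAbove_ne j i
  have hcol : ∀ {v} (i : Fin k) (hv : c v = j.succAbove i),
      (finSuccAboveEquiv j).symm ⟨c v, hmem i hv⟩ = i :=
    fun i hv => (Equiv.symm_apply_eq _).mpr (Subtype.ext hv)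
  refine ⟨fun v => (finSuccAboveEquiv j).symm ⟨c v, v.2⟩, fun i => ?_, fun i i' hii' => ?_⟩
  · obtain ⟨v, hv⟩ := hc.1 (j.succAbove i)
    exact ⟨⟨v, hmem i hv⟩, hcol i hv⟩
  · obtain ⟨p, q, hpq, hp, hq⟩ := hc.2 _ _ ((Fin.succAbove_right_injective (p := j)).ne hii')
    exact ⟨⟨p, hmem i hp⟩, ⟨q, hmem i' hq⟩, hpq, hcol i hp, hcol i' hq⟩

theorem ObstructionFree.pseudoachromaticNumber_le_cliqueNum [Finite V] (hG : ObstructionFree G) :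
    pseudoachromaticNumber G ≤ G.cliqueNum := by
  induction h : Nat.card V using Nat.strong_induction_on generalizing V with
  | _ n ih =>
  refine csSup_le' fun k ⟨c, hc⟩ => ?_
  rcases k with _ | _ | k
  · exact Nat.zero_le _
  · obtain ⟨v, -⟩ := hc.1 0
    exact le_cliqueNum_of_isClique (isClique_singleton v) (c := c)
      fun i _ => ⟨v, rfl, Subsingleton.elim (α := Fin 1) _ _⟩
  obtain ⟨u₀, v₀, huv₀, hu₀, hv₀⟩ := hc.2 0 1 (by simp)
  by_cases hcov : ∀ p q, G.Adj p q → G.Reachable u₀ p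
  · rcases k with _ | k
    · refine le_cliqueNum_of_isClique (isClique_pair.mpr fun _ => huv₀) (c := c) fun i _ => ?_
      fin_cases i
      exacts [⟨u₀, by simp, hu₀⟩, ⟨v₀, by simp, hv₀⟩]
    set C := G.connectedComponentMk u₀
    obtain ⟨⟨u, huC⟩, hu⟩ := C.connected_toSimpleGraph.exists_isUniversal
      (hG.induce C.supp).pathGraph_four (hG.induce C.supp).cycleGraph_four
    have hu' : ∀ p q, G.Adj p q → p ≠ u → G.Adj u p := fun p q hpq hpu =>
      @hu ⟨p, (C.mem_supp_iff p).mpr (ConnectedComponent.eq.mpr (hcov p q hpq).symm)⟩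
        fun h => hpu (congrArg Subtype.val h).symm
    obtain ⟨c', hc'⟩ := hc.exists_induce_ne (c u)
    have hlt : Nat.card {v | c v ≠ c u} < n := h ▸ Finite.card_subtype_lt (not_not.mpr rfl)
    have hk := (le_pseudoachromaticNumber hc').trans (ih _ hlt (hG.induce _) rfl)
    have := cliqueNum_induce_lt (s := {v | c v ≠ c u}) (by simp) hu' (by omega)
    omega
  · obtain ⟨x, y, hxy, hux⟩ : ∃ x y, G.Adj x y ∧ ¬G.Reachable u₀ x := by simpa using hcov
    have hcov' : ∀ p q, G.Adj p q → G.Reachable u₀ p ∨ G.Reachable x p := by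
      intro p q hpq
      by_contra! hp
      exact hG.threeK2 (threeK2_isIndContained huv₀ hxy hpq hux hp.1 hp.2)
    rcases hc.surjOn_or_surjOn (by omega) hcov' with hsurj | hsurj
    · exact le_cliqueNum_of_isClique
        (isClique_setOf_reachable_of_not_reachable hG.p3SumK2 hxy hux) hsurj
    · exact le_cliqueNum_of_isClique
        (isClique_setOf_reachable_of_not_reachable hG.p3SumK2 huv₀ fun h => hux h.symm) hsurj

end

/-- `G` is αh-perfect iff `G` is ωψ-perfect. -/
theorem achromatic_hadwiger_perfect_iff_omega_pseudoachromatic_perfect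
    {V : Type*} [Fintype V] (G : SimpleGraph V) :
    (∀ s : Set V, achromaticNumber (G.induce s) = hadwigerNumber (G.induce s)) ↔
      (∀ s : Set V, (G.induce s).cliqueNum = pseudoachromaticNumber (G.induce s)) := by
  constructor
  · intro hG s
    exact le_antisymm
      (cliqueNum_le_achromaticNumber.trans achromaticNumber_le_pseudoachromaticNumber)
      ((obstructionFree_of_achromaticNumber_eq_hadwigerNumber hG).induce s
        ).pseudoachromaticNumber_le_cliqueNum
  · intro hG s
    have := hG s
    have := cliqueNum_le_achromaticNumber (G := G.induce s)
    have := achromaticNumber_le_pseudoachromaticNumber (G := G.induce s)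
    have := cliqueNum_le_hadwigerNumber (G := G.induce s)
    have := hadwigerNumber_le_pseudoachromaticNumber (G := G.induce s)
    omega
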